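/- Let g ∈ F[X_1,...,X_q] have total degree at most d with component polynomials g_0,...,g_d, let f_1,...,f_q ∈ F[x], and set h = g(f_1,...,f_q) mod (x^{2^m} − 1). For j ∈ {0,...,d} define h_j = (x^{⌊j/2⌋}·g_j(f_{1,ev}, f_{1,od}, ..., f_{q,ev}, f_{q,od})) mod (x^{2^{m−1}} − 1). Then h(x) = Σ_{j=0}^{⌊d/2⌋} h_{2j}(x²) + x·h_{2j+1}(x²) holds as a polynomial identity in F[x] (where h_{2j+1} is taken to be 0 if 2j+1 > d). -/

import Mathlib

open Polynomial

/-- The even part of a polynomial: the polynomial whose coefficients are the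
even-index coefficients of `p`, so that `p(x) = p_ev(x²) + x·p_od(x²)`. -/
noncomputable def evenPart {F : Type*} [Semiring F] (p : F[X]) : F[X] :=
  ∑ i ∈ Finset.range (p.natDegree + 1), C (p.coeff (2 * i)) * X ^ i

/-- The odd part of a polynomial: the polynomial whose coefficients are the
odd-index coefficients of `p`, so that `p(x) = p_ev(x²) + x·p_od(x²)`. -/
noncomputable def oddPart {F : Type*} [Semiring F] (p : F[X]) : F[X] :=
  ∑ i ∈ Finset.range (p.natDegree + 1), C (p.coeff (2 * i + 1)) * X ^ i

section Aux

variable {F : Type*} [Field F]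

private lemma sum_range_two_mul {M : Type*} [AddCommMonoid M] (a : ℕ → M) (N : ℕ) :
    ∑ n ∈ Finset.range (2 * N), a n = ∑ i ∈ Finset.range N, (a (2 * i) + a (2 * i + 1)) := by
  induction N with
  | zero => simp
  | succ N ih =>
    have h2 : 2 * (N + 1) = (2 * N + 1) + 1 := by ring
    rw [h2, Finset.sum_range_succ, Finset.sum_range_succ, ih, Finset.sum_range_succ, add_assoc]

private lemma sum_range_even_odd {M : Type*} [AddCommMonoid M] (a : ℕ → M) (n : ℕ) :
    ∑ j ∈ Finset.range n, a j =
      ∑ k ∈ Finset.range ((n + 1) / 2), a (2 * k) +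
        ∑ k ∈ Finset.range (n / 2), a (2 * k + 1) := by
  induction n with
  | zero => simp
  | succ n ih =>
    rw [Finset.sum_range_succ, ih]
    rcases Nat.even_or_odd n with ⟨t, ht⟩ | ⟨t, ht⟩
    · subst ht
      have h1 : (t + t + 1 + 1) / 2 = (t + t + 1) / 2 + 1 := by omega
      have h2 : (t + t + 1) / 2 = t := by omega
      have h3 : (t + t) / 2 = t := by omega
      rw [h1, h2, h3, Finset.sum_range_succ]
      have : 2 * t = t + t := by ring
      rw [this, add_right_comm]
    · subst ht
      have h1 : (2 * t + 1 + 1 + 1) / 2 = t + 1 := by omega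
      have h2 : (2 * t + 1 + 1) / 2 = t + 1 := by omega
      have h4 : (2 * t + 1) / 2 = t := by omega
      rw [h1, h2, h4, Finset.sum_range_succ (fun k => a (2 * k + 1)) t, add_assoc]

private lemma evenPart_add_oddPart (p : F[X]) :
    (evenPart p).comp (X ^ 2) + X * (oddPart p).comp (X ^ 2) = p := by
  have hb : p.natDegree < 2 * (p.natDegree + 1) := by omega
  conv_rhs => rw [p.as_sum_range' _ hb]
  rw [sum_range_two_mul (fun n => (monomial n) (p.coeff n)) (p.natDegree + 1)]
  rw [evenPart, oddPart, comp_eq_aeval, comp_eq_aeval, map_sum, map_sum, Finset.mul_sum,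
    ← Finset.sum_add_distrib]
  refine Finset.sum_congr rfl fun i _ => ?_
  simp only [map_mul, aeval_C, map_pow, aeval_X, ← C_mul_X_pow_eq_monomial, ← pow_mul,
    algebraMap_eq]
  ring

private lemma modByMonic_eq_of (g p k r : F[X]) (hg : g.Monic) (heq : p = g * k + r)
    (hd : r.degree < g.degree) : p %ₘ g = r := by
  rw [heq, add_modByMonic, self_mul_modByMonic hg, (modByMonic_eq_self_iff hg).mpr hd, zero_add]

private lemma monic_X_pow_sub_one {N : ℕ} (hN : 0 < N) : ((X : F[X]) ^ N - 1).Monic := by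
  have := monic_X_pow_sub_C (1 : F) hN.ne'
  rwa [map_one] at this

private lemma degree_X_pow_sub_one {N : ℕ} (hN : 0 < N) :
    ((X : F[X]) ^ N - 1).degree = N := by
  have := degree_X_pow_sub_C hN (1 : F)
  rwa [map_one] at this

private lemma comp_X_sq_modByMonic (N : ℕ) (hN : 0 < N) (e : ℕ) (he : e < 2) (Q : F[X]) :
    (X ^ e * Q.comp (X ^ 2)) %ₘ (X ^ (2 * N) - 1) =
      X ^ e * (Q %ₘ (X ^ N - 1)).comp (X ^ 2) := by
  have h1 : ((X : F[X]) ^ N - 1).Monic := monic_X_pow_sub_one hN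
  have h2 : ((X : F[X]) ^ (2 * N) - 1).Monic := monic_X_pow_sub_one (by omega)
  set r := Q %ₘ (X ^ N - 1) with hr
  have hQ : Q = r + (X ^ N - 1) * (Q /ₘ (X ^ N - 1)) := (modByMonic_add_div Q (X ^ N - 1)).symm
  have hcomp : ((X : F[X]) ^ N - 1).comp (X ^ 2) = X ^ (2 * N) - 1 := by
    rw [sub_comp, X_pow_comp, one_comp, ← pow_mul]
  have heq : X ^ e * Q.comp (X ^ 2) =
      (X ^ (2 * N) - 1) * (X ^ e * (Q /ₘ (X ^ N - 1)).comp (X ^ 2)) +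
        X ^ e * r.comp (X ^ 2) := by
    conv_lhs => rw [hQ]
    rw [add_comp, mul_comp, hcomp]
    ring
  refine modByMonic_eq_of _ _ _ _ h2 heq ?_
  rw [degree_X_pow_sub_one (by omega : 0 < 2 * N)]
  rcases eq_or_ne r 0 with hr0 | hr0
  · rw [hr0]
    simp only [zero_comp, mul_zero, degree_zero]
    exact WithBot.bot_lt_coe _
  · have hrc : r.comp (X ^ 2) = expand F 2 r := rfl
    have hrc0 : r.comp (X ^ 2) ≠ 0 := by
      rw [hrc]
      exact fun hc => hr0 ((expand_eq_zero (by norm_num)).mp hc)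
    have hp0 : X ^ e * r.comp (X ^ 2) ≠ 0 :=
      mul_ne_zero (pow_ne_zero _ X_ne_zero) hrc0
    rw [← natDegree_lt_iff_degree_lt hp0]
    have hnd : (X ^ e * r.comp (X ^ 2)).natDegree = e + r.natDegree * 2 := by
      rw [natDegree_mul (pow_ne_zero _ X_ne_zero) hrc0, natDegree_X_pow, hrc,
        natDegree_expand]
    have hrdeg : r.natDegree < N := by
      rw [natDegree_lt_iff_degree_lt hr0, ← degree_X_pow_sub_one (F := F) hN]
      exact degree_modByMonic_lt Q h1
    omega

private lemma sum_modByMonic {ι : Type*} (s : Finset ι) (p : ι → F[X]) (g : F[X]) :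
    (∑ i ∈ s, p i) %ₘ g = ∑ i ∈ s, p i %ₘ g := by
  classical
  induction s using Finset.induction with
  | empty => simp [zero_modByMonic]
  | insert _ _ hx ih => rw [Finset.sum_insert hx, Finset.sum_insert hx, add_modByMonic, ih]

end Aux

/-- With `g` of total degree at most `d` with component polynomials
`g₀, …, g_d`, `h = g(f₁, …, f_q) %ₘ (x^(2^m) - 1)` and, for `j ≤ d`,
`h_j = (x^(⌊j/2⌋)·g_j(f_{1,ev}, f_{1,od}, …, f_{q,ev}, f_{q,od})) %ₘ (x^(2^(m-1)) - 1)`,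
the identity `h(x) = Σ_{j=0}^{⌊d/2⌋} h_{2j}(x²) + x·h_{2j+1}(x²)` holds in `F[x]`,
where `h_{2j+1}` is taken to be `0` whenever `2j + 1 > d`. -/
theorem stmt_8 {F : Type*} [Field F] (m q d : ℕ) (hm : 1 ≤ m) (hq : 1 ≤ q) (w : F)
    (hw : IsPrimitiveRoot w (2 ^ m))
    (g : MvPolynomial (Fin q) F) (hg : g.totalDegree ≤ d)
    (gs : ℕ → MvPolynomial (Fin q ⊕ Fin q) F)
    (hgs : MvPolynomial.aeval
        (fun i : Fin q =>
          (MvPolynomial.X (Option.some (Sum.inl i)) +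
            MvPolynomial.X Option.none * MvPolynomial.X (Option.some (Sum.inr i)) :
            MvPolynomial (Option (Fin q ⊕ Fin q)) F)) g =
      ∑ j ∈ Finset.range (d + 1),
        MvPolynomial.X Option.none ^ j * MvPolynomial.rename Option.some (gs j))
    (f : Fin q → F[X]) (h : F[X])
    (hh : h = MvPolynomial.aeval f g %ₘ (X ^ 2 ^ m - 1))
    (hj : ℕ → F[X])
    (hhj : ∀ j ≤ d, hj j =
      (X ^ (j / 2) * MvPolynomial.aeval
          (Sum.elim (fun i => evenPart (f i)) (fun i => oddPart (f i))) (gs j))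
        %ₘ (X ^ 2 ^ (m - 1) - 1)) :
    h = ∑ j ∈ Finset.range (d / 2 + 1),
      ((hj (2 * j)).comp (X ^ 2) +
        X * (if 2 * j + 1 ≤ d then hj (2 * j + 1) else 0).comp (X ^ 2)) := by
  classical
  set E : (Fin q ⊕ Fin q) → F[X] :=
    Sum.elim (fun i => evenPart (f i)) (fun i => oddPart (f i)) with hE
  set P : ℕ → F[X] := fun j => MvPolynomial.aeval E (gs j) with hP
  set σ : Option (Fin q ⊕ Fin q) → F[X] :=
    fun o => o.elim X (fun s => (E s).comp (X ^ 2)) with hσ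
  -- Step 1: express `aeval f g` as a sum.
  have key1 : MvPolynomial.aeval f g
      = ∑ j ∈ Finset.range (d + 1), X ^ j * (P j).comp (X ^ 2) := by
    have h2 : MvPolynomial.aeval (fun i : Fin q => MvPolynomial.aeval σ
        ((MvPolynomial.X (Option.some (Sum.inl i)) +
          MvPolynomial.X Option.none * MvPolynomial.X (Option.some (Sum.inr i)) :
          MvPolynomial (Option (Fin q ⊕ Fin q)) F))) g =
        MvPolynomial.aeval σ (∑ j ∈ Finset.range (d + 1),
          MvPolynomial.X Option.none ^ j * MvPolynomial.rename Option.some (gs j)) := by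
      rw [← MvPolynomial.comp_aeval_apply, hgs]
    have hL : (fun i : Fin q => MvPolynomial.aeval σ
        ((MvPolynomial.X (Option.some (Sum.inl i)) +
          MvPolynomial.X Option.none * MvPolynomial.X (Option.some (Sum.inr i)) :
          MvPolynomial (Option (Fin q ⊕ Fin q)) F))) = f := by
      funext i
      simp only [map_add, map_mul, MvPolynomial.aeval_X, hσ, Option.elim]
      exact evenPart_add_oddPart (f i)
    rw [hL] at h2
    rw [h2, map_sum]
    refine Finset.sum_congr rfl fun j _ => ?_
    rw [map_mul, map_pow, MvPolynomial.aeval_X, MvPolynomial.aeval_rename]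
    have hσnone : σ Option.none = X := rfl
    have hσsome : (σ ∘ Option.some) = fun s => (E s).comp (X ^ 2) := rfl
    rw [hσnone, hσsome]
    congr 1
    have hstep : (fun s => (E s).comp (X ^ 2)) =
        fun s => (Polynomial.aeval (X ^ 2 : F[X])) (E s) := by
      funext s; rw [comp_eq_aeval]
    rw [hstep]
    exact (MvPolynomial.comp_aeval_apply (R := F) (f := E)
      (Polynomial.aeval (X ^ 2 : F[X])) (gs j)).symm
  -- Step 2/3: reduce mod and use the definition of hj.
  obtain ⟨m', rfl⟩ : ∃ m', m = m' + 1 := ⟨m - 1, by omega⟩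
  have hm2 : 2 ^ (m' + 1) = 2 * 2 ^ m' := by rw [pow_succ, mul_comm]
  have hm1 : m' + 1 - 1 = m' := by omega
  have key2 : h = ∑ j ∈ Finset.range (d + 1), X ^ (j % 2) * (hj j).comp (X ^ 2) := by
    rw [hh, key1, sum_modByMonic]
    refine Finset.sum_congr rfl fun j hjmem => ?_
    have hjd : j ≤ d := by
      have := Finset.mem_range.mp hjmem; omega
    have hsplit : X ^ j * (P j).comp (X ^ 2)
        = X ^ (j % 2) * (X ^ (j / 2) * P j).comp (X ^ 2) := by
      rw [mul_comp, X_pow_comp, ← pow_mul, ← mul_assoc, ← pow_add]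
      congr 2
      omega
    rw [hsplit, hm2,
      comp_X_sq_modByMonic (2 ^ m') (pow_pos (by norm_num) m') (j % 2)
        (Nat.mod_lt _ (by norm_num)) (X ^ (j / 2) * P j),
      hhj j hjd, hm1]
  rw [key2, sum_range_even_odd (fun j => X ^ (j % 2) * (hj j).comp (X ^ 2)) (d + 1)]
  have hc1 : (d + 1 + 1) / 2 = d / 2 + 1 := by omega
  rw [hc1]
  have hsimpe : ∀ k, X ^ (2 * k % 2) * (hj (2 * k)).comp (X ^ 2) = (hj (2 * k)).comp (X ^ 2) := by
    intro k
    have : 2 * k % 2 = 0 := by omega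
    rw [this, pow_zero, one_mul]
  have hsimpo : ∀ k, X ^ ((2 * k + 1) % 2) * (hj (2 * k + 1)).comp (X ^ 2)
      = X * (hj (2 * k + 1)).comp (X ^ 2) := by
    intro k
    have : (2 * k + 1) % 2 = 1 := by omega
    rw [this, pow_one]
  rw [Finset.sum_congr rfl (fun k _ => hsimpe k), Finset.sum_congr rfl (fun k _ => hsimpo k),
    Finset.sum_add_distrib]
  congr 1
  rw [← Finset.sum_subset
    (Finset.range_subset_range.mpr (by omega : (d + 1) / 2 ≤ d / 2 + 1))
    (fun k _ hk => ?_)]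
  · refine Finset.sum_congr rfl fun k hk => ?_
    have : 2 * k + 1 ≤ d := by
      have := Finset.mem_range.mp hk; omega
    rw [if_pos this]
  · have hk1 : ¬ (2 * k + 1 ≤ d) := by
      have := Finset.mem_range.not.mp hk; omega
    rw [if_neg hk1, zero_comp, mul_zero]
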